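/- arXiv:2405.00996 — 3 statements merged into one kernel-verified Lean document; each statement's English description precedes it below -/
import Mathlib

section
/- For natural numbers k, l with 0 ≤ l ≤ k and l ≡ k (mod 2), define D_{k,l} recursively by D_{k,k} = 1 and D_{k,l} = k!/(((k+l)/2)! ((k-l)/2)!) - Σ_{0 < m ≤ (k-l)/2} D_{k, l+2m}. Then D_{k,l} = k!(l+1) / (((k+l)/2 + 1)! ((k-l)/2)!). -/
open Finset

lemma fac_ne (n : ℕ) : ((Nat.factorial n : ℕ) : ℚ) ≠ 0 :=
  Nat.cast_ne_zero.mpr (Nat.factorial_ne_zero n)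

lemma key : ∀ j l : ℕ, ∑ m ∈ Finset.range (j+1),
    ((Nat.factorial (l+2*j) * (l+2*m+1) : ℕ) : ℚ) /
      ((Nat.factorial (l+j+m+1) * Nat.factorial (j-m) : ℕ) : ℚ)
  = ((Nat.factorial (l+2*j) : ℕ) : ℚ) / ((Nat.factorial (l+j) * Nat.factorial j : ℕ) : ℚ) := by
  intro j
  induction j with
  | zero =>
    intro l
    simp [Nat.factorial_succ]
    field_simp [fac_ne]
  | succ j ih =>
    intro l
    rw [Finset.sum_range_succ']
    have hs : ∑ i ∈ Finset.range (j+1),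
        ((Nat.factorial (l+2*(j+1)) * (l+2*(i+1)+1) : ℕ) : ℚ) /
          ((Nat.factorial (l+(j+1)+(i+1)+1) * Nat.factorial ((j+1)-(i+1)) : ℕ) : ℚ)
        = ((Nat.factorial ((l+2)+2*j) : ℕ) : ℚ) /
          ((Nat.factorial ((l+2)+j) * Nat.factorial j : ℕ) : ℚ) := by
      rw [← ih (l+2)]
      apply Finset.sum_congr rfl
      intro i _
      have a1 : l+2*(j+1) = (l+2)+2*j := by omega
      have a2 : l+2*(i+1)+1 = (l+2)+2*i+1 := by omega
      have a3 : l+(j+1)+(i+1)+1 = (l+2)+j+i+1 := by omega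
      have a4 : (j+1)-(i+1) = j-i := by omega
      rw [a1, a2, a3, a4]
    rw [hs]
    rw [show l+(j+1)+0+1 = (l+2)+j from by omega,
        show (j+1)-0 = j+1 from by omega,
        show (l+2)+2*j = l+2*(j+1) from by omega,
        show (l+2)+j = (l+(j+1))+1 from by omega]
    push_cast [Nat.factorial_succ (l+(j+1)), Nat.factorial_succ j]
    have h1 : ((l:ℚ)+(j+1)+1) ≠ 0 := by positivity
    have h2 : ((j:ℚ)+1) ≠ 0 := by positivity
    field_simp [fac_ne]
    ring

/-- The coefficients defined by the recursion `D k k = 1`,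
`D k l = k!/(((k+l)/2)! ((k-l)/2)!) - Σ_{0 < m ≤ (k-l)/2} D k (l+2m)` satisfy the
closed form `D k l = k!(l+1)/(((k+l)/2+1)! ((k-l)/2)!)`. -/
theorem D_closed_form (D : ℕ → ℕ → ℚ) (k : ℕ)
    (h1 : D k k = 1)
    (h2 : ∀ l, l < k → l % 2 = k % 2 →
      D k l = ((Nat.factorial k : ℕ) : ℚ) /
          ((Nat.factorial ((k + l) / 2) * Nat.factorial ((k - l) / 2) : ℕ) : ℚ)
        - ∑ m ∈ Finset.Icc 1 ((k - l) / 2), D k (l + 2 * m)) :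
    ∀ l, l ≤ k → l % 2 = k % 2 →
      D k l = ((Nat.factorial k * (l + 1) : ℕ) : ℚ) /
        ((Nat.factorial ((k + l) / 2 + 1) * Nat.factorial ((k - l) / 2) : ℕ) : ℚ) := by
  have main : ∀ n : ℕ, ∀ l, l ≤ k → l % 2 = k % 2 → k = l + 2*n →
      D k l = ((Nat.factorial k * (l + 1) : ℕ) : ℚ) /
        ((Nat.factorial ((k + l) / 2 + 1) * Nat.factorial ((k - l) / 2) : ℕ) : ℚ) := by
    intro n
    induction n using Nat.strong_induction_on with
    | _ n ih =>
      intro l hl hp hk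
      rcases Nat.eq_zero_or_pos n with h0 | hpos
      · subst h0
        have hlk : l = k := by omega
        rw [hlk, h1, show (k+k)/2 = k from by omega, show (k-k)/2 = 0 from by omega,
            Nat.factorial_succ]
        push_cast
        field_simp [fac_ne]
        ring
      · have hlk : l < k := by omega
        rw [h2 l hlk hp,
            show (k+l)/2 = l+n from by omega, show (k-l)/2 = n from by omega]
        have hsum : ∑ m ∈ Finset.Icc 1 n, D k (l + 2*m)
            = ∑ m ∈ Finset.Icc 1 n, ((Nat.factorial k * (l+2*m+1) : ℕ) : ℚ) /
              ((Nat.factorial (l+n+m+1) * Nat.factorial (n-m) : ℕ) : ℚ) := by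
          apply Finset.sum_congr rfl
          intro m hm
          simp only [Finset.mem_Icc] at hm
          rw [ih (n-m) (by omega) (l+2*m) (by omega) (by omega) (by omega),
              show (k+(l+2*m))/2+1 = l+n+m+1 from by omega,
              show (k-(l+2*m))/2 = n-m from by omega]
        rw [hsum]
        have hk2 := key n l
        have hins : Finset.range (n+1) = insert 0 (Finset.Icc 1 n) := by
          ext x; simp only [Finset.mem_range, Finset.mem_insert, Finset.mem_Icc]; omega
        rw [show l+2*n = k from hk.symm, hins,
            Finset.sum_insert (by simp)] at hk2
        rw [show l+2*0+1 = l+1 from by omega, show l+n+0+1 = l+n+1 from by omega,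
            show n-0 = n from by omega] at hk2
        linarith [hk2]
  intro l hl hp
  have hpar : (k - l) % 2 = 0 := by omega
  exact main ((k-l)/2) l hl hp (by omega)
end

section
/- For every natural number k ≥ 0, Σ_{0 ≤ l ≤ k, l ≡ k mod 2} (k! (l+1)) / (((k+l)/2 + 1)! ((k-l)/2)!) = k! / (⌈k/2⌉! ⌊k/2⌋!). -/
open Finset

lemma term_eq (k t : ℕ) (h1 : k ≤ 2 * t) (h2 : t ≤ k) :
    ((Nat.factorial k * (2 * t - k + 1) : ℕ) : ℚ) /
      ((Nat.factorial (t + 1) * Nat.factorial (k - t) : ℕ) : ℚ)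
    = (k.choose t : ℚ) - (k.choose (t + 1) : ℚ) := by
  rcases eq_or_lt_of_le h2 with rfl | hlt
  · rw [Nat.choose_self, Nat.choose_succ_self, Nat.sub_self, Nat.factorial_zero]
    have h3 : 2 * t - t + 1 = t + 1 := by omega
    rw [h3, Nat.factorial_succ]
    push_cast
    have : ((t + 1 : ℚ)) * t.factorial ≠ 0 := by positivity
    field_simp
    ring
  · have e1 : (k.choose t : ℚ) = k.factorial / (t.factorial * (k - t).factorial) :=
      Nat.cast_choose ℚ h2
    have e2 : (k.choose (t+1) : ℚ) = k.factorial / ((t+1).factorial * (k - (t+1)).factorial) :=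
      Nat.cast_choose ℚ hlt
    have hkt : k - t = (k - (t+1)) + 1 := by omega
    rw [e1, e2, hkt, Nat.factorial_succ (t), Nat.factorial_succ (k - (t+1))]
    have hc : ((2 * t - k + 1 : ℕ) : ℚ) = 2 * t - k + 1 := by
      push_cast [Nat.cast_sub h1]; ring
    have hc2 : ((k - (t+1) : ℕ) : ℚ) = k - t - 1 := by
      push_cast [Nat.cast_sub hlt]; ring
    push_cast [hc, hc2]
    have p1 : (t.factorial : ℚ) ≠ 0 := by positivity
    have p2 : ((k - (t+1)).factorial : ℚ) ≠ 0 := by positivity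
    have p3 : (t : ℚ) + 1 ≠ 0 := by positivity
    have p4 : ((k : ℚ) - t) ≠ 0 := by
      have : (t : ℚ) < k := by exact_mod_cast hlt
      linarith
    have p4' : (k : ℚ) - t - 1 + 1 ≠ 0 := by
      rw [sub_add_cancel]; exact p4
    rw [hc2] at *
    field_simp
    ring

/-- `Σ_{0 ≤ l ≤ k, l ≡ k (2)} k!(l+1)/(((k+l)/2+1)! ((k-l)/2)!) = k!/(⌈k/2⌉! ⌊k/2⌋!)`. -/
theorem sum_ballot_numbers (k : ℕ) :
    (∑ l ∈ Finset.range (k + 1),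
        if l % 2 = k % 2 then
          ((Nat.factorial k * (l + 1) : ℕ) : ℚ) /
            ((Nat.factorial ((k + l) / 2 + 1) * Nat.factorial ((k - l) / 2) : ℕ) : ℚ)
        else 0) =
      ((Nat.factorial k : ℕ) : ℚ) /
        ((Nat.factorial ((k + 1) / 2) * Nat.factorial (k / 2) : ℕ) : ℚ) := by
  have hm : (k + 1) / 2 ≤ k := by omega
  set m := (k + 1) / 2 with hmdef
  have h1 : (∑ l ∈ Finset.range (k + 1),
        if l % 2 = k % 2 then
          ((Nat.factorial k * (l + 1) : ℕ) : ℚ) /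
            ((Nat.factorial ((k + l) / 2 + 1) * Nat.factorial ((k - l) / 2) : ℕ) : ℚ)
        else 0)
      = ∑ j ∈ Finset.range (k + 1 - m),
          ((k.choose (m + j) : ℚ) - (k.choose (m + j + 1) : ℚ)) := by
    rw [← Finset.sum_filter]
    refine Finset.sum_nbij' (fun l => (k + l) / 2 - m) (fun j => 2 * (m + j) - k)
      ?_ ?_ ?_ ?_ ?_
    · intro l hl
      simp only [Finset.mem_filter, Finset.mem_range] at hl ⊢
      omega
    · intro j hj
      simp only [Finset.mem_filter, Finset.mem_range] at hj ⊢
      omega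
    · intro l hl
      simp only [Finset.mem_filter, Finset.mem_range] at hl
      show 2 * (m + ((k + l) / 2 - m)) - k = l
      omega
    · intro j hj
      simp only [Finset.mem_range] at hj
      show (k + (2 * (m + j) - k)) / 2 - m = j
      omega
    · intro l hl
      simp only [Finset.mem_filter, Finset.mem_range] at hl
      have ht : m + ((k + l) / 2 - m) = (k + l) / 2 := by omega
      have e1 : (k - l) / 2 = k - (k + l) / 2 := by omega
      have e2 : l + 1 = 2 * ((k + l) / 2) - k + 1 := by omega
      rw [ht, e1, e2]
      exact term_eq k _ (by omega) (by omega)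
  have h2 := Finset.sum_range_sub' (fun j => (k.choose (m + j) : ℚ)) (k + 1 - m)
  simp only [← Nat.add_assoc] at h2
  rw [h1, h2]
  have e3 : m + (k + 1 - m) = k + 1 := by omega
  have e4 : k - m = k / 2 := by omega
  simp only [Nat.add_zero, e3, Nat.choose_succ_self, Nat.cast_zero, sub_zero]
  rw [Nat.cast_choose ℚ hm, e4]
  push_cast
  ring
end

section
/- Let G(X, Y, M) be defined by G(X, Y, M) = (1/(√π M)) ∫_X^{X+Y} ∫_{-∞}^{∞} (e^{-((t-T)/M)²} + e^{-((t+T)/M)²}) · t · tanh(π t) dt dT · (1/π). Then G(X, Y, M) = (2XY + Y²)/π + O(MY) as X → ∞, uniformly for 1 ≤ M ≤ Y ≤ X. -/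
/-!
The function `t ↦ t tanh (πt)` differs from `|t|` by an error `e(t) ∈ [0, 1]`. Against the
kernel `w(t - T) + w(t + T)`, with `w(s) = exp (-(s/M)²)`, the error part contributes at most
`2 ∫ w = 2√π M`, while `∫ w(t - T) |t| dt = ∫ w(s) |s + T| ds` lies between
`|∫ w(s) (s + T) ds| = |T| √π M` (as `w` is even) and
`∫ w(s) (|s| + |T|) ds = M² + |T| √π M`.
Hence the inner integral is `2T√π M + O(M²)` for `T ≥ 0`, and integrating over `[X, X + Y]`
gives `√π M (2XY + Y²) + O(M² Y)`.
-/

open MeasureTheory Real Set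
open scoped Interval

lemma integral_Ioi_mul_exp_neg_mul_sq {b : ℝ} (hb : 0 < b) :
    ∫ x in Ioi (0 : ℝ), x * exp (-b * x ^ 2) = (2 * b)⁻¹ := by
  have h := integral_mul_cexp_neg_mul_sq (b := (b : ℂ)) (by simpa using hb)
  rw [← Complex.ofReal_inj, ← integral_complex_ofReal]
  push_cast
  exact h

lemma integral_abs_mul_exp_neg_mul_sq {b : ℝ} (hb : 0 < b) :
    ∫ x, |x| * exp (-b * x ^ 2) = b⁻¹ := by
  have h := integral_comp_abs (f := fun x => x * exp (-b * x ^ 2))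
  simp only [sq_abs] at h
  rw [h, integral_Ioi_mul_exp_neg_mul_sq hb]
  field_simp

namespace Real

@[fun_prop]
lemma continuous_tanh : Continuous tanh := by
  simp only [funext tanh_eq_sinh_div_cosh]
  exact continuous_sinh.div continuous_cosh fun x => (cosh_pos x).ne'

lemma mul_tanh_le_abs (x : ℝ) : x * tanh x ≤ |x| :=
  calc x * tanh x ≤ |x| * |tanh x| := by rw [← abs_mul]; exact le_abs_self _
    _ ≤ |x| := mul_le_of_le_one_right (abs_nonneg x) (abs_tanh_lt_one x).le

lemma abs_sub_mul_tanh_le_one (x : ℝ) : |x| - x * tanh x ≤ 1 := by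
  have heven : x * tanh x = |x| * tanh |x| := by
    rcases abs_choice x with h | h <;> rw [h]
    rw [tanh_neg]; ring
  set y := |x|
  have hy : y - y * tanh y = y * exp (-y) / cosh y := by
    rw [tanh_eq_sinh_div_cosh, ← cosh_sub_sinh]
    field_simp
  have hyexp : y * exp (-y) ≤ 1 := by
    calc y * exp (-y) ≤ exp y * exp (-y) := by
          gcongr; linarith [add_one_le_exp y]
      _ = 1 := by rw [← exp_add, add_neg_cancel, exp_zero]
  rw [heven, hy, div_le_one (cosh_pos y)]
  exact hyexp.trans (one_le_cosh y)

end Real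

lemma abs_sub_mul_tanh_pi_mul_mem_Icc (t : ℝ) : |t| - t * tanh (π * t) ∈ Icc 0 1 := by
  have h₁ := mul_tanh_le_abs (π * t)
  have h₂ := abs_sub_mul_tanh_le_one (π * t)
  rw [abs_mul, abs_of_pos pi_pos, mul_assoc] at h₁ h₂
  constructor
  · nlinarith [pi_pos]
  · nlinarith [pi_gt_three, abs_nonneg t]

section EvenWeight

variable {w : ℝ → ℝ}

lemma integral_mul_eq_zero_of_even (hw : ∀ s, w (-s) = w s) : ∫ s, s * w s = 0 := by
  have h := integral_neg_eq_self (fun s => s * w s) volume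
  simp only [hw, neg_mul, integral_neg] at h
  linarith

lemma MeasureTheory.Integrable.comp_sub_right_mul_abs (hw : Integrable w)
    (hw₁ : Integrable fun s => s * w s) (T : ℝ) : Integrable fun t => w (t - T) * |t| := by
  refine ((hw₁.norm.comp_sub_right T).add ((hw.norm.comp_sub_right T).const_mul |T|)).mono'
    ((hw.comp_sub_right T).aestronglyMeasurable.mul continuous_abs.aestronglyMeasurable) ?_
  filter_upwards with t
  have h : |t| ≤ |t - T| + |T| := by simpa using abs_add_le (t - T) T
  simp only [Pi.add_apply, norm_mul, norm_eq_abs, abs_abs]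
  nlinarith [abs_nonneg (w (t - T))]

lemma abs_integral_comp_sub_mul_abs_sub_le (hw₀ : ∀ s, 0 ≤ w s) (heven : ∀ s, w (-s) = w s)
    (hw : Integrable w) (hw₁ : Integrable fun s => s * w s) (T : ℝ) :
    |(∫ t, w (t - T) * |t|) - |T| * ∫ s, w s| ≤ ∫ s, |s| * w s := by
  have hshift : ∫ t, w (t - T) * |t| = ∫ s, w s * |s + T| := by
    rw [← integral_sub_right_eq_self (fun s => w s * |s + T|) T]
    simp only [sub_add_cancel]
  have habs₁ : Integrable fun s => |s| * w s := by
    simpa [abs_mul, abs_of_nonneg (hw₀ _)] using hw₁.abs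
  have hmean : ∫ s, w s * (s + T) = T * ∫ s, w s := by
    have hsplit : (fun s => w s * (s + T)) = fun s => s * w s + T * w s := by
      ext s; ring
    rw [hsplit, integral_add hw₁ (hw.const_mul T), integral_const_mul,
      integral_mul_eq_zero_of_even heven, zero_add]
  have hlower : |T| * ∫ s, w s ≤ ∫ s, w s * |s + T| := by
    calc |T| * ∫ s, w s = |∫ s, w s * (s + T)| := by
          rw [hmean, abs_mul, abs_of_nonneg (integral_nonneg hw₀)]
      _ ≤ ∫ s, |w s * (s + T)| := abs_integral_le_integral_abs
      _ = ∫ s, w s * |s + T| := by simp only [abs_mul, abs_of_nonneg (hw₀ _)]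
  have hupper : ∫ s, w s * |s + T| ≤ (∫ s, |s| * w s) + |T| * ∫ s, w s := by
    rw [← integral_const_mul, ← integral_add habs₁ (hw.const_mul _)]
    refine integral_mono ?_ (habs₁.add (hw.const_mul _)) fun s => ?_
    · simpa using (hw.comp_sub_right_mul_abs hw₁ T).comp_add_right T
    · nlinarith [abs_add_le s T, hw₀ s]
  rw [hshift, abs_of_nonneg (sub_nonneg.2 hlower)]
  linarith

lemma abs_integral_mul_tanh_sub_le (hw₀ : ∀ s, 0 ≤ w s) (heven : ∀ s, w (-s) = w s)
    (hw : Integrable w) (hw₁ : Integrable fun s => s * w s) (T : ℝ) :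
    |(∫ t, (w (t - T) + w (t + T)) * t * tanh (π * t)) - 2 * |T| * ∫ s, w s|
      ≤ 2 * ((∫ s, |s| * w s) + ∫ s, w s) := by
  set K : ℝ → ℝ := fun t => w (t - T) + w (t + T)
  set e : ℝ → ℝ := fun t => |t| - t * tanh (π * t)
  have hK : Integrable K := (hw.comp_sub_right T).add (hw.comp_add_right T)
  have hw_add : Integrable fun t => w (t + T) * |t| := by
    simpa using hw.comp_sub_right_mul_abs hw₁ (-T)
  have hKabs : Integrable fun t => K t * |t| := by
    simp only [K, add_mul]
    exact (hw.comp_sub_right_mul_abs hw₁ T).add hw_add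
  have hKe : Integrable fun t => K t * e t :=
    hK.mul_bdd (c := 1) (by fun_prop) (ae_of_all _ fun t => by
      rw [norm_eq_abs, abs_of_nonneg (abs_sub_mul_tanh_pi_mul_mem_Icc t).1]
      exact (abs_sub_mul_tanh_pi_mul_mem_Icc t).2)
  have hsplit : ∫ t, K t * t * tanh (π * t) = (∫ t, K t * |t|) - ∫ t, K t * e t := by
    rw [← integral_sub hKabs hKe]
    congr 1 with t
    ring
  have hKabs_eq : ∫ t, K t * |t| = (∫ t, w (t - T) * |t|) + ∫ t, w (t + T) * |t| := by
    rw [← integral_add (hw.comp_sub_right_mul_abs hw₁ T) hw_add]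
    simp only [K, add_mul]
  have hK_eq : ∫ t, K t = 2 * ∫ s, w s := by
    rw [integral_add (hw.comp_sub_right T) (hw.comp_add_right T), integral_sub_right_eq_self,
      integral_add_right_eq_self]
    ring
  have he_nonneg : 0 ≤ ∫ t, K t * e t := integral_nonneg fun t =>
    mul_nonneg (add_nonneg (hw₀ _) (hw₀ _)) (abs_sub_mul_tanh_pi_mul_mem_Icc t).1
  have he_le : ∫ t, K t * e t ≤ ∫ t, K t := integral_mono hKe hK fun t =>
    mul_le_of_le_one_right (add_nonneg (hw₀ _) (hw₀ _)) (abs_sub_mul_tanh_pi_mul_mem_Icc t).2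
  have h_sub := abs_integral_comp_sub_mul_abs_sub_le hw₀ heven hw hw₁ T
  have h_add := abs_integral_comp_sub_mul_abs_sub_le hw₀ heven hw hw₁ (-T)
  simp only [sub_neg_eq_add, abs_neg] at h_add
  rw [hsplit, hKabs_eq]
  rw [abs_le] at h_sub h_add ⊢
  constructor <;> linarith

end EvenWeight

section GaussianScale

variable {M : ℝ}

lemma exp_neg_div_sq_eq (s : ℝ) : exp (-(s / M) ^ 2) = exp (-(M ^ 2)⁻¹ * s ^ 2) := by
  ring_nf

lemma integrable_exp_neg_div_sq (hM : M ≠ 0) : Integrable fun s => exp (-(s / M) ^ 2) := by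
  simpa only [exp_neg_div_sq_eq] using integrable_exp_neg_mul_sq (by positivity : 0 < (M ^ 2)⁻¹)

lemma integrable_mul_exp_neg_div_sq (hM : M ≠ 0) :
    Integrable fun s => s * exp (-(s / M) ^ 2) := by
  simpa only [exp_neg_div_sq_eq] using
    integrable_mul_exp_neg_mul_sq (by positivity : 0 < (M ^ 2)⁻¹)

lemma integral_exp_neg_div_sq (hM : 0 < M) : ∫ s, exp (-(s / M) ^ 2) = √π * M := by
  simp only [exp_neg_div_sq_eq, integral_gaussian, div_inv_eq_mul, sqrt_mul pi_pos.le,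
    sqrt_sq hM.le]

lemma integral_abs_mul_exp_neg_div_sq (hM : M ≠ 0) : ∫ s, |s| * exp (-(s / M) ^ 2) = M ^ 2 := by
  simp only [exp_neg_div_sq_eq, integral_abs_mul_exp_neg_mul_sq (by positivity : 0 < (M ^ 2)⁻¹),
    inv_inv]

lemma abs_integral_gaussian_mul_tanh_sub_le (hM : 0 < M) (T : ℝ) :
    |(∫ t, (exp (-((t - T) / M) ^ 2) + exp (-((t + T) / M) ^ 2)) * t * tanh (π * t))
        - 2 * |T| * (√π * M)| ≤ 2 * (M ^ 2 + √π * M) := by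
  have h := abs_integral_mul_tanh_sub_le (w := fun s => exp (-(s / M) ^ 2))
    (fun s => (exp_pos _).le) (fun s => by simp only [neg_div, neg_sq])
    (integrable_exp_neg_div_sq hM.ne') (integrable_mul_exp_neg_div_sq hM.ne') T
  rwa [integral_exp_neg_div_sq hM, integral_abs_mul_exp_neg_div_sq hM.ne'] at h

end GaussianScale

lemma intervalIntegral.norm_integral_sub_le_of_norm_sub_le {f g : ℝ → ℝ} {a b C : ℝ}
    (hf : AEStronglyMeasurable f (volume.restrict (Ι a b))) (hg : IntervalIntegrable g volume a b)
    (hfg : ∀ x ∈ Ι a b, ‖f x - g x‖ ≤ C) :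
    ‖(∫ x in a..b, f x) - ∫ x in a..b, g x‖ ≤ C * |b - a| := by
  have hfg_int : IntervalIntegrable (fun x => f x - g x) volume a b :=
    (intervalIntegrable_const (c := C)).mono_fun' (hf.sub hg.def'.aestronglyMeasurable)
      ((ae_restrict_mem measurableSet_uIoc).mono hfg)
  have hf_int : IntervalIntegrable f volume a b := by
    simpa using hfg_int.add hg
  rw [← intervalIntegral.integral_sub hf_int hg]
  exact intervalIntegral.norm_integral_le_of_norm_le_const hfg

/-- The diagonal term of the Kuznetsov formula:
`G(X,Y,M) = (2XY + Y²)/π + O(MY)` uniformly for `1 ≤ M ≤ Y ≤ X`, `X` large. -/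
theorem diagonal_term_asymptotic :
    ∃ C > (0 : ℝ), ∃ X₀ : ℝ, ∀ X Y M : ℝ, X₀ ≤ X → 1 ≤ M → M ≤ Y → Y ≤ X →
      |(1 / Real.pi) * ((1 / (Real.sqrt Real.pi * M)) *
          ∫ T in X..(X + Y),
            ∫ t : ℝ,
              (Real.exp (-((t - T) / M) ^ 2) + Real.exp (-((t + T) / M) ^ 2)) *
                t * Real.tanh (Real.pi * t)) -
        (2 * X * Y + Y ^ 2) / Real.pi| ≤ C * M * Y := by
  refine ⟨2, two_pos, 0, fun X Y M _ hM hMY hYX => ?_⟩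
  have hM₀ : 0 < M := by linarith
  set F : ℝ → ℝ := fun T => ∫ t, (exp (-((t - T) / M) ^ 2) + exp (-((t + T) / M) ^ 2)) * t *
    tanh (π * t)
  have hF_meas : AEStronglyMeasurable F (volume.restrict (Ι X (X + Y))) :=
    (StronglyMeasurable.integral_prod_right' (f := fun p : ℝ × ℝ =>
      (exp (-((p.2 - p.1) / M) ^ 2) + exp (-((p.2 + p.1) / M) ^ 2)) * p.2 * tanh (π * p.2))
      (Continuous.stronglyMeasurable (by fun_prop))).aestronglyMeasurable
  have hF : ∀ T ∈ Ι X (X + Y), ‖F T - 2 * T * (√π * M)‖ ≤ 6 * M ^ 2 := by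
    intro T hT
    have hT₀ : 0 ≤ T := by linarith [(uIoc_of_le (by linarith : X ≤ X + Y) ▸ hT).1]
    have := abs_integral_gaussian_mul_tanh_sub_le hM₀ T
    have hsqrt : √π ≤ 2 := sqrt_le_iff.2 ⟨by norm_num, by linarith [pi_le_four]⟩
    rw [abs_of_nonneg hT₀] at this
    rw [norm_eq_abs]
    nlinarith
  have hE := intervalIntegral.norm_integral_sub_le_of_norm_sub_le hF_meas
    ((by fun_prop : Continuous fun T => 2 * T * (√π * M)).intervalIntegrable _ _) hF
  have hlin : ∫ T in X..(X + Y), 2 * T * (√π * M) = √π * M * (2 * X * Y + Y ^ 2) := by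
    rw [intervalIntegral.integral_mul_const, intervalIntegral.integral_const_mul, integral_id]
    ring
  rw [hlin, add_sub_cancel_left, norm_eq_abs, abs_of_nonneg (show 0 ≤ Y by linarith)] at hE
  have hπ : 3 ≤ π * √π := by
    nlinarith [pi_gt_three, one_le_sqrt.2 (by linarith [pi_gt_three] : 1 ≤ π)]
  rw [show (1 / π) * ((1 / (√π * M)) * ∫ T in X..(X + Y), F T) - (2 * X * Y + Y ^ 2) / π
      = ((∫ T in X..(X + Y), F T) - √π * M * (2 * X * Y + Y ^ 2)) / (π * √π * M) by
    field_simp]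
  have hden : 0 < π * √π * M := by positivity
  rw [abs_div, abs_of_pos hden, div_le_iff₀ hden]
  refine hE.trans ?_
  nlinarith [mul_le_mul_of_nonneg_left hπ (mul_nonneg (sq_nonneg M) (by linarith : 0 ≤ Y))]
end
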